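/- arXiv:math/0608622 — 2 statements merged into one kernel-verified Lean document; each statement's English description precedes it below -/
import Mathlib

section
/- Let n be a positive integer, let π ∈ NC(n), and consider θ := π^(odd) ∪ K(π)^(even), which is a parity-preserving partition in NC(2n). Then: (1) θ has exactly two outer blocks; (2) if A is a non-outer block of θ, then the block Parent_θ(A) has parity opposite from the parity of A. -/
open Finset

attribute [local instance] Classical.propDecidable

open scoped ComplexOrder

namespace BBP

/-- Partitions of `{1,…,m}` modeled as `Finpartition`s of `univ : Finset (Fin m)`. -/
abbrev FP (m : ℕ) := Finpartition (Finset.univ : Finset (Fin m))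

noncomputable instance (m : ℕ) : Fintype (FP m) :=
  Fintype.ofInjective (fun π : FP m => π.parts) fun a b h => by
    cases a; cases b; simpa using h

/-- `x` is the minimum of the set `C`. -/
def IsMinOf {m : ℕ} (x : Fin m) (C : Finset (Fin m)) : Prop :=
  x ∈ C ∧ ∀ y ∈ C, x ≤ y

/-- `x` is the maximum of the set `C`. -/
def IsMaxOf {m : ℕ} (x : Fin m) (C : Finset (Fin m)) : Prop :=
  x ∈ C ∧ ∀ y ∈ C, y ≤ x

/-- `a` and `b` lie in one block of `π`. -/
def SameBlock {m : ℕ} (π : FP m) (a b : Fin m) : Prop :=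
  ∃ B ∈ π.parts, a ∈ B ∧ b ∈ B

/-- `π` is non-crossing: if `i<j<k<l`, `i,k` in one block and `j,l` in one block,
then all of them are in one block. -/
def IsNC {m : ℕ} (π : FP m) : Prop :=
  ∀ i j k l : Fin m, i < j → j < k → k < l →
    SameBlock π i k → SameBlock π j l → SameBlock π i j

/-- `A` embraces `B` : `min A ≤ min B` and `max B ≤ max A`. -/
def Embraces {m : ℕ} (A B : Finset (Fin m)) : Prop :=
  ∃ a₁ a₂ b₁ b₂ : Fin m, IsMinOf a₁ A ∧ IsMaxOf a₂ A ∧ IsMinOf b₁ B ∧ IsMaxOf b₂ B ∧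
    a₁ ≤ b₁ ∧ b₂ ≤ a₂

/-- `B` strictly embraces `A` : `min B < min A` and `max A < max B`. -/
def StrictlyEmbraces {m : ℕ} (B A : Finset (Fin m)) : Prop :=
  ∃ b₁ b₂ a₁ a₂ : Fin m, IsMinOf b₁ B ∧ IsMaxOf b₂ B ∧ IsMinOf a₁ A ∧ IsMaxOf a₂ A ∧
    b₁ < a₁ ∧ a₂ < b₂

/-- `A` is an outer block of `π`. -/
def IsOuter {m : ℕ} (π : FP m) (A : Finset (Fin m)) : Prop :=
  A ∈ π.parts ∧ ¬ ∃ B ∈ π.parts, StrictlyEmbraces B A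

/-- The number `|π|_out` of outer blocks of `π`. -/
noncomputable def numOuter {m : ℕ} (π : FP m) : ℕ :=
  (π.parts.filter fun A => IsOuter π A).card

/-- Reversed refinement order: every block of `ρ` is a union of blocks of `π`. -/
def Refines {m : ℕ} (π ρ : FP m) : Prop :=
  ∀ B ∈ π.parts, ∃ C ∈ ρ.parts, B ⊆ C

/-- The partial order `π ≪ ρ`. -/
def Ll {m : ℕ} (π ρ : FP m) : Prop :=
  Refines π ρ ∧
    ∀ C ∈ ρ.parts, ∃ B ∈ π.parts, ∃ x y : Fin m,
      IsMinOf x C ∧ IsMaxOf y C ∧ x ∈ B ∧ y ∈ B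

/-- The partition `1ₙ` of `{1,…,n+1}` with a single block. -/
noncomputable def fullPart (n : ℕ) : FP (n+1) :=
  Finpartition.indiscrete (by simpa using (Finset.univ_nonempty (α := Fin (n+1))).ne_empty)

/-- `π` is an interval partition. -/
def IsIntervalPartition {m : ℕ} (π : FP m) : Prop :=
  ∀ B ∈ π.parts, ∀ x ∈ B, ∀ z ∈ B, ∀ y : Fin m, x ≤ y → y ≤ z → y ∈ B

/-- `σ` is the permutation associated to `π` : on each block `{b₁ < ⋯ < b_q}` it is the
cycle `b₁ ↦ b₂ ↦ ⋯ ↦ b_q ↦ b₁`. -/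
def IsAssocPerm {m : ℕ} (π : FP m) (σ : Equiv.Perm (Fin m)) : Prop :=
  ∀ B ∈ π.parts, ∀ b ∈ B, σ b ∈ B ∧
    ((b < σ b ∧ ∀ x ∈ B, b < x → σ b ≤ x) ∨ (IsMaxOf b B ∧ IsMinOf (σ b) B))

/-- `κ` is the Kreweras complement of `π`, characterized by `P_κ = P_π⁻¹ ∘ P_{1ₙ}`,
where `P_{1ₙ}` is the cycle `1 ↦ 2 ↦ ⋯ ↦ n ↦ 1` (i.e. `finRotate`). -/
def IsKrewerasPair {m : ℕ} (π κ : FP m) : Prop :=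
  ∃ σπ σκ : Equiv.Perm (Fin m), IsAssocPerm π σπ ∧ IsAssocPerm κ σκ ∧
    σκ = σπ⁻¹ * finRotate m

/-- the element `2a-1` of `{1,…,2n}`, in `Fin (2n)` (0-indexed). -/
def oddEmb {n : ℕ} (a : Fin n) : Fin (2*n) := ⟨2*a.val, by have := a.isLt; omega⟩

/-- the element `2a` of `{1,…,2n}`, in `Fin (2n)` (0-indexed). -/
def evenEmb {n : ℕ} (a : Fin n) : Fin (2*n) := ⟨2*a.val + 1, by have := a.isLt; omega⟩

/-- `θ = π^(odd) ∪ ρ^(even)` : the blocks of `θ` are the sets `{2a-1 : a ∈ A}` for `A`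
a block of `π` and the sets `{2b : b ∈ B}` for `B` a block of `ρ`. -/
def IsOddEvenJoin {n : ℕ} (π ρ : FP n) (θ : FP (2*n)) : Prop :=
  θ.parts = π.parts.image (fun B => B.image oddEmb) ∪
    ρ.parts.image (fun B => B.image evenEmb)

/-- a block consisting of odd elements of `{1,…,2n}` (even 0-indexed values). -/
def OddBlock {m : ℕ} (B : Finset (Fin m)) : Prop := ∀ x ∈ B, x.val % 2 = 0

/-- a block consisting of even elements of `{1,…,2n}` (odd 0-indexed values). -/
def EvenBlock {m : ℕ} (B : Finset (Fin m)) : Prop := ∀ x ∈ B, x.val % 2 = 1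

/-- every block of `θ` is contained in the odds or in the evens. -/
def ParityPreserving {m : ℕ} (θ : FP m) : Prop :=
  ∀ B ∈ θ.parts, OddBlock B ∨ EvenBlock B

def OppositeParity {m : ℕ} (A B : Finset (Fin m)) : Prop :=
  (OddBlock A ∧ EvenBlock B) ∨ (EvenBlock A ∧ OddBlock B)

def SameParity {m : ℕ} (A B : Finset (Fin m)) : Prop :=
  (OddBlock A ∧ OddBlock B) ∨ (EvenBlock A ∧ EvenBlock B)

/-- `P = Parent_θ(A)` : the unique block `P ≠ A` of `θ` embracing `A` such that every
block `A' ≠ A` of `θ` embracing `A` also embraces `P`. -/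
def IsParent {m : ℕ} (θ : FP m) (A P : Finset (Fin m)) : Prop :=
  P ∈ θ.parts ∧ P ≠ A ∧ Embraces P A ∧
    ∀ A' ∈ θ.parts, A' ≠ A → Embraces A' A → Embraces A' P

/-- `θ` has exactly two outer blocks. -/
def ExactlyTwoOuterBlocks {m : ℕ} (θ : FP m) : Prop :=
  ∃ M ∈ θ.parts, ∃ N ∈ θ.parts, M ≠ N ∧ IsOuter θ M ∧ IsOuter θ N ∧
    ∀ A ∈ θ.parts, IsOuter θ A → A = M ∨ A = N

/-- A series in `ℂ₀⟨⟨z₁,…,z_k⟩⟩`, given by its family of coefficients: `f n w` is the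
coefficient of `z_{w 0} z_{w 1} ⋯ z_{w n}` (a word of length `n+1 ≥ 1`). -/
abbrev NCSeries (k : ℕ) := (n : ℕ) → (Fin (n+1) → Fin k) → ℂ

/-- The coefficient `Cf_{w|B}(f)` of the restriction of the word `w` to the set `B`,
listing the elements of `B` in increasing order.  (Equals `1` for `B = ∅`.) -/
noncomputable def partCoeff {k m : ℕ} (f : NCSeries k) (w : Fin (m+1) → Fin k)
    (B : Finset (Fin (m+1))) : ℂ :=
  if h : B.Nonempty then
    f (B.card - 1) (fun j =>
      w ((B.orderIsoOfFin (Nat.succ_pred_eq_of_pos (Finset.card_pos.mpr h)).symm j).1))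
  else 1

/-- The generalized coefficient `Cf_{w;π}(f) = ∏_{B block of π} Cf_{w|B}(f)`. -/
noncomputable def genCoeff {k m : ℕ} (f : NCSeries k) (w : Fin (m+1) → Fin k)
    (π : FP (m+1)) : ℂ :=
  ∏ B ∈ π.parts, partCoeff f w B

/-- Linear functionals on `ℂ⟨X₁,…,X_k⟩`. -/
abbrev Dist (k : ℕ) := FreeAlgebra ℂ (Fin k) →ₗ[ℂ] ℂ

/-- `μ ∈ D_alg(k)` : `μ` is normalized by `μ(1) = 1`. -/
def IsDalg {k : ℕ} (μ : Dist k) : Prop := μ 1 = 1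

/-- The moment series `M_μ`, with `(momentSeries μ) n w = μ (X_{w 0} ⋯ X_{w n})`. -/
noncomputable def momentSeries {k : ℕ} (μ : Dist k) : NCSeries k :=
  fun _ w => μ ((List.ofFn fun j => FreeAlgebra.ι ℂ (w j)).prod)

/-- `f = R_μ` : the moments of `μ` are obtained from `f` by summation over all
non-crossing partitions. -/
def IsRTransform {k : ℕ} (μ : Dist k) (f : NCSeries k) : Prop :=
  ∀ (n : ℕ) (w : Fin (n+1) → Fin k),
    momentSeries μ n w = ∑ π : FP (n+1), if IsNC π then genCoeff f w π else 0

/-- `g = η_μ` : the moments of `μ` are obtained from `g` by summation over all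
interval partitions. -/
def IsEtaSeries {k : ℕ} (μ : Dist k) (g : NCSeries k) : Prop :=
  ∀ (n : ℕ) (w : Fin (n+1) → Fin k),
    momentSeries μ n w = ∑ π : FP (n+1), if IsIntervalPartition π then genCoeff g w π else 0

/-- `μ ∈ D_c(k)` : `μ` is the joint distribution of a `k`-tuple of selfadjoint elements
with respect to a state on a unital C*-algebra. -/
def IsDc {k : ℕ} (μ : Dist k) : Prop :=
  IsDalg μ ∧
  ∃ (A : Type) (_ : NormedRing A) (_ : StarRing A) (_ : CStarRing A)
    (_ : NormedAlgebra ℂ A) (_ : StarModule ℂ A) (_ : CompleteSpace A)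
    (φ : A →ₗ[ℂ] ℂ) (x : Fin k → A),
      φ 1 = 1 ∧ (∀ a : A, 0 ≤ φ (star a * a)) ∧ (∀ i, IsSelfAdjoint (x i)) ∧
      ∀ (n : ℕ) (w : Fin (n+1) → Fin k),
        momentSeries μ n w = φ ((List.ofFn fun j => x (w j)).prod)

/-- convergence in moments. -/
def ConvInMoments {k : ℕ} (μseq : ℕ → Dist k) (μ : Dist k) : Prop :=
  ∀ P : FreeAlgebra ℂ (Fin k),
    Filter.Tendsto (fun N => μseq N P) Filter.atTop (nhds (μ P))

/-- coefficientwise convergence of series. -/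
def ConvCoeffwise {k : ℕ} (fseq : ℕ → NCSeries k) (f : NCSeries k) : Prop :=
  ∀ (n : ℕ) (w : Fin (n+1) → Fin k),
    Filter.Tendsto (fun N => fseq N n w) Filter.atTop (nhds (f n w))

/-- `ν` is the `p`-fold free additive convolution `μ ⊞ ⋯ ⊞ μ`, i.e. `R_ν = p · R_μ`. -/
def IsNFoldFree {k : ℕ} (p : ℕ) (μ ν : Dist k) : Prop :=
  ∃ f : NCSeries k, IsRTransform μ f ∧ IsRTransform ν (fun n w => (p : ℂ) * f n w)

/-- `ν` is the `p`-fold Boolean convolution `μ ⊎ ⋯ ⊎ μ`, i.e. `η_ν = p · η_μ`. -/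
def IsNFoldBool {k : ℕ} (p : ℕ) (μ ν : Dist k) : Prop :=
  ∃ g : NCSeries k, IsEtaSeries μ g ∧ IsEtaSeries ν (fun n w => (p : ℂ) * g n w)

/-- `ν = 𝔹(μ)` : the Boolean Bercovici–Pata bijection, `R_{𝔹(μ)} = η_μ`. -/
def IsBP {k : ℕ} (μ ν : Dist k) : Prop :=
  ∃ f : NCSeries k, IsEtaSeries μ f ∧ IsRTransform ν f

/-- `μ ∈ D_c(k)` is infinitely divisible with respect to `⊞`. -/
def IsInfDiv {k : ℕ} (μ : Dist k) : Prop :=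
  IsDc μ ∧ ∀ N : ℕ, 0 < N → ∃ ν : Dist k, IsDc ν ∧ IsNFoldFree N ν μ

/-- `g = Reta(f)`, i.e. there is `μ ∈ D_alg(k)` with `f = R_μ` and `g = η_μ`. -/
def RetaRel {k : ℕ} (f g : NCSeries k) : Prop :=
  ∃ μ : Dist k, IsDalg μ ∧ IsRTransform μ f ∧ IsEtaSeries μ g



-- ===================== auxiliary lemmas =====================

lemma isMinOf_min' {m : ℕ} {S : Finset (Fin m)} (h : S.Nonempty) : IsMinOf (S.min' h) S :=
  ⟨S.min'_mem h, fun y hy => S.min'_le y hy⟩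

lemma isMaxOf_max' {m : ℕ} {S : Finset (Fin m)} (h : S.Nonempty) : IsMaxOf (S.max' h) S :=
  ⟨S.max'_mem h, fun y hy => S.le_max' y hy⟩

lemma isMinOf_eq {m : ℕ} {S : Finset (Fin m)} {x : Fin m} (hx : IsMinOf x S)
    (h : S.Nonempty) : x = S.min' h :=
  le_antisymm (hx.2 _ (S.min'_mem h)) (S.min'_le x hx.1)

lemma isMaxOf_eq {m : ℕ} {S : Finset (Fin m)} {x : Fin m} (hx : IsMaxOf x S)
    (h : S.Nonempty) : x = S.max' h :=
  le_antisymm (S.le_max' x hx.1) (hx.2 _ (S.max'_mem h))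

lemma embraces_bounds {m : ℕ} {X Y : Finset (Fin m)} (h : Embraces X Y)
    (hX : X.Nonempty) (hY : Y.Nonempty) :
    X.min' hX ≤ Y.min' hY ∧ Y.max' hY ≤ X.max' hX := by
  obtain ⟨a₁, a₂, b₁, b₂, h1, h2, h3, h4, h5, h6⟩ := h
  rw [← isMinOf_eq h1 hX, ← isMaxOf_eq h2 hX, ← isMinOf_eq h3 hY, ← isMaxOf_eq h4 hY]
  exact ⟨h5, h6⟩

lemma assoc_mem {m : ℕ} {π : FP m} {σ : Equiv.Perm (Fin m)} (h : IsAssocPerm π σ)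
    {B : Finset (Fin m)} (hB : B ∈ π.parts) {b : Fin m} (hb : b ∈ B) : σ b ∈ B :=
  (h B hB b hb).1

lemma assoc_succ {m : ℕ} {π : FP m} {σ : Equiv.Perm (Fin m)} (h : IsAssocPerm π σ)
    {B : Finset (Fin m)} (hB : B ∈ π.parts) {b : Fin m} (hb : b ∈ B)
    {d : Fin m} (hd : d ∈ B) (hbd : b < d) :
    b < σ b ∧ ∀ x ∈ B, b < x → σ b ≤ x := by
  rcases (h B hB b hb).2 with h' | h'
  · exact h'
  · exact absurd (h'.1.2 d hd) (not_le.mpr hbd)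

lemma assoc_wrap {m : ℕ} {π : FP m} {σ : Equiv.Perm (Fin m)} (h : IsAssocPerm π σ)
    {B : Finset (Fin m)} (hB : B ∈ π.parts) {b : Fin m} (hb : b ∈ B)
    (hle : σ b ≤ b) : IsMaxOf b B ∧ IsMinOf (σ b) B := by
  rcases (h B hB b hb).2 with h' | h'
  · exact absurd h'.1 (not_lt.mpr hle)
  · exact h'

lemma straddle {m : ℕ} {ρ : FP m} {τ : Equiv.Perm (Fin m)} (h : IsAssocPerm ρ τ)
    {D : Finset (Fin m)} (hD : D ∈ ρ.parts) {b c d : Fin m}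
    (hb : b ∈ D) (hd : d ∈ D) (hbc : b < c) (hcd : c ≤ d) :
    ∃ e ∈ D, b ≤ e ∧ e < c ∧ τ e ∈ D ∧ c ≤ τ e ∧ τ e ≤ d := by
  classical
  set S := D.filter (fun x => x < c) with hS
  have hbS : b ∈ S := by simp [hS, hb, hbc]
  have hSne : S.Nonempty := ⟨b, hbS⟩
  set e := S.max' hSne with he
  have heS : e ∈ S := S.max'_mem hSne
  have heD : e ∈ D := (Finset.mem_filter.mp heS).1
  have hec : e < c := (Finset.mem_filter.mp heS).2
  have hbe : b ≤ e := S.le_max' b hbS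
  have hed : e < d := lt_of_lt_of_le hec hcd
  obtain ⟨h1, h2⟩ := assoc_succ h hD heD hd hed
  have hτD : τ e ∈ D := assoc_mem h hD heD
  have hcτ : c ≤ τ e := by
    by_contra hcon
    push_neg at hcon
    have hmem : τ e ∈ S := by simp [hS, hτD, hcon]
    exact absurd (S.le_max' _ hmem) (not_le.mpr h1)
  exact ⟨e, heD, hbe, hec, hτD, hcτ, h2 d hd hed⟩

lemma finRotate_val {m : ℕ} {x : Fin m} (h : x.val + 1 < m) :
    (finRotate m x).val = x.val + 1 := by
  cases m with
  | zero => exact absurd x.isLt (by omega)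
  | succ k =>
    have hx : x < Fin.last k := by
      rw [Fin.lt_def]; simp only [Fin.val_last]; omega
    rw [finRotate_succ_apply, Fin.val_add_one_of_lt hx]

lemma lemH1 {n : ℕ} {π κ : FP n} (hπ : IsNC π) {σπ σκ : Equiv.Perm (Fin n)}
    (hπa : IsAssocPerm π σπ) (hκa : IsAssocPerm κ σκ)
    (hcomp : ∀ x, σπ (σκ x) = finRotate n x)
    {a b c d : Fin n} (hab : a ≤ b) (hbc : b < c) (hcd : c ≤ d)
    (hac : SameBlock π a c) (hbd : SameBlock κ b d) : False := by
  obtain ⟨B, hB, haB, hcB⟩ := hac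
  obtain ⟨D, hD, hbD, hdD⟩ := hbd
  obtain ⟨e, heD, hbe, hec, hfD, hcf, hfd⟩ := straddle hκa hD hbD hdD hbc hcd
  have he1lt : e.val + 1 < n := by have h1 := c.isLt; have h2 := Fin.lt_def.mp hec; omega
  set e1 : Fin n := ⟨e.val + 1, he1lt⟩ with he1def
  have he1val : e1.val = e.val + 1 := rfl
  have hσf : σπ (σκ e) = e1 := by
    apply Fin.val_injective
    rw [hcomp e, finRotate_val he1lt]
  obtain ⟨B', hB', hfB'⟩ := π.exists_mem (Finset.mem_univ (σκ e))
  have he1B' : e1 ∈ B' := by rw [← hσf]; exact assoc_mem hπa hB' hfB'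
  have he1c : e1 ≤ c := by rw [Fin.le_def]; have := Fin.lt_def.mp hec; omega
  have he1f : e1 ≤ σκ e := le_trans he1c hcf
  have hwrap := assoc_wrap hπa hB' hfB' (by rw [hσf]; exact he1f)
  have hminB' : ∀ x ∈ B', e1 ≤ x := by
    intro x hx
    have := hwrap.2.2 x hx
    rwa [hσf] at this
  have hBB' : B = B' := by
    rcases eq_or_lt_of_le hcf with hceqf | hclt
    · exact π.eq_of_mem_parts hB hB' hcB (by rwa [hceqf])
    · rcases eq_or_lt_of_le he1c with he1eqc | he1ltc
      · exact π.eq_of_mem_parts hB hB' hcB (by rwa [← he1eqc])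
      · have hae1 : a < e1 := by
          rw [Fin.lt_def]
          have h1 := Fin.le_def.mp hab
          have h2 := Fin.le_def.mp hbe
          omega
        obtain ⟨E, hE, haE, he1E⟩ := hπ a e1 c (σκ e) hae1 he1ltc hclt
          ⟨B, hB, haB, hcB⟩ ⟨B', hB', he1B', hfB'⟩
        rw [π.eq_of_mem_parts hB hE haB haE, π.eq_of_mem_parts hE hB' he1E he1B']
  have hfin : e1 ≤ a := hminB' a (hBB' ▸ haB)
  have h1 := Fin.le_def.mp hfin
  have h2 := Fin.le_def.mp hab
  have h3 := Fin.le_def.mp hbe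
  omega

lemma lemH2 {n : ℕ} {π κ : FP n} (hπ : IsNC π) {σπ σκ : Equiv.Perm (Fin n)}
    (hπa : IsAssocPerm π σπ) (hκa : IsAssocPerm κ σκ)
    (hcomp : ∀ x, σπ (σκ x) = finRotate n x)
    {a b c d : Fin n} (hab : a < b) (hbc : b ≤ c) (hcd : c < d)
    (hac : SameBlock κ a c) (hbd : SameBlock π b d) : False := by
  obtain ⟨D, hD, haD, hcD⟩ := hac
  obtain ⟨B, hB, hbB, hdB⟩ := hbd
  obtain ⟨e, heD, hae, heb, hfD, hbf, hfc⟩ := straddle hκa hD haD hcD hab hbc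
  have he1lt : e.val + 1 < n := by have h1 := b.isLt; have h2 := Fin.lt_def.mp heb; omega
  set e1 : Fin n := ⟨e.val + 1, he1lt⟩ with he1def
  have he1val : e1.val = e.val + 1 := rfl
  have hσf : σπ (σκ e) = e1 := by
    apply Fin.val_injective
    rw [hcomp e, finRotate_val he1lt]
  obtain ⟨B', hB', hfB'⟩ := π.exists_mem (Finset.mem_univ (σκ e))
  have he1B' : e1 ∈ B' := by rw [← hσf]; exact assoc_mem hπa hB' hfB'
  have he1b : e1 ≤ b := by rw [Fin.le_def]; have := Fin.lt_def.mp heb; omega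
  have he1f : e1 ≤ σκ e := le_trans he1b hbf
  have hwrap := assoc_wrap hπa hB' hfB' (by rw [hσf]; exact he1f)
  have hmaxB' : ∀ x ∈ B', x ≤ σκ e := hwrap.1.2
  have hBB' : B = B' := by
    rcases eq_or_lt_of_le he1b with h1 | h1
    · exact π.eq_of_mem_parts hB hB' hbB (by rwa [h1] at he1B')
    · rcases eq_or_lt_of_le hbf with h2 | h2
      · exact π.eq_of_mem_parts hB hB' hbB (by rwa [← h2] at hfB')
      · obtain ⟨E, hE, he1E, hbE⟩ := hπ e1 b (σκ e) d h1 h2 (lt_of_le_of_lt hfc hcd)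
          ⟨B', hB', he1B', hfB'⟩ ⟨B, hB, hbB, hdB⟩
        rw [π.eq_of_mem_parts hB hE hbB hbE, π.eq_of_mem_parts hE hB' he1E he1B']
  have hfin : d ≤ σκ e := hmaxB' d (hBB' ▸ hdB)
  have h1 := Fin.le_def.mp hfin
  have h2 := Fin.le_def.mp hfc
  have h3 := Fin.lt_def.mp hcd
  omega

lemma kappaNC {n : ℕ} {π κ : FP n} (hπ : IsNC π) {σπ σκ : Equiv.Perm (Fin n)}
    (hπa : IsAssocPerm π σπ) (hκa : IsAssocPerm κ σκ)
    (hcomp : ∀ x, σπ (σκ x) = finRotate n x) : IsNC κ := by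
  intro b b' d d' h1 h2 h3 hbd hb'd'
  obtain ⟨D, hD, hbD, hdD⟩ := hbd
  obtain ⟨D', hD', hb'D', hd'D'⟩ := hb'd'
  by_cases hDD' : D = D'
  · exact ⟨D, hD, hbD, by rw [hDD']; exact hb'D'⟩
  exfalso
  obtain ⟨e, heD, hbe, heb', hfD, hb'f, hfd⟩ := straddle hκa hD hbD hdD h1 (le_of_lt h2)
  have he1lt : e.val + 1 < n := by have ha := b'.isLt; have hb := Fin.lt_def.mp heb'; omega
  set e1 : Fin n := ⟨e.val + 1, he1lt⟩ with he1def
  have hσf : σπ (σκ e) = e1 := by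
    apply Fin.val_injective
    rw [hcomp e, finRotate_val he1lt]
  obtain ⟨B', hB', hfB'⟩ := π.exists_mem (Finset.mem_univ (σκ e))
  have he1B' : e1 ∈ B' := by rw [← hσf]; exact assoc_mem hπa hB' hfB'
  have hb'ltf : b' < σκ e := by
    rcases eq_or_lt_of_le hb'f with h | h
    · exact absurd (κ.eq_of_mem_parts hD' hD (by rwa [h] at hb'D') hfD).symm hDD'
    · exact h
  have he1b' : e1 ≤ b' := by rw [Fin.le_def]; exact Fin.lt_def.mp heb'
  exact lemH1 hπ hπa hκa hcomp he1b' hb'ltf (le_trans hfd (le_of_lt h3))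
    ⟨B', hB', he1B', hfB'⟩ ⟨D', hD', hb'D', hd'D'⟩

lemma strict_of_tight {m : ℕ} {A C : Finset (Fin m)} (hAne : A.Nonempty) {u v : Fin m}
    (hu : u ∈ C) (hv : v ∈ C) (huval : u.val + 1 = (A.min' hAne).val)
    (hvval : v.val = (A.max' hAne).val + 1) : StrictlyEmbraces C A := by
  have hCne : C.Nonempty := ⟨u, hu⟩
  refine ⟨C.min' hCne, C.max' hCne, A.min' hAne, A.max' hAne, isMinOf_min' _, isMaxOf_max' _,
    isMinOf_min' _, isMaxOf_max' _, ?_, ?_⟩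
  · rw [Fin.lt_def]; have := Fin.le_def.mp (C.min'_le u hu); omega
  · rw [Fin.lt_def]; have := Fin.le_def.mp (C.le_max' v hv); omega

lemma parent_core {m : ℕ} {θ : FP m} (hNC : IsNC θ)
    {A C P : Finset (Fin m)} (hA : A ∈ θ.parts) (hC : C ∈ θ.parts)
    (hAne : A.Nonempty) {u v : Fin m} (hu : u ∈ C) (hv : v ∈ C)
    (huval : u.val + 1 = (A.min' hAne).val) (hvval : v.val = (A.max' hAne).val + 1)
    (hP : IsParent θ A P)
    (hPApar : ∀ x ∈ P, ∀ y ∈ A, x.val % 2 = y.val % 2)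
    (hCApar : ∀ x ∈ C, ∀ y ∈ A, x.val % 2 ≠ y.val % 2) : False := by
  obtain ⟨hPmem, hPA, hPembr, hall⟩ := hP
  have hCne : C.Nonempty := ⟨u, hu⟩
  have hPne : P.Nonempty := θ.nonempty_of_mem_parts hPmem
  have hCA : C ≠ A := by
    rintro rfl; exact hCApar u hu u hu rfl
  have hCembrA : Embraces C A := by
    refine ⟨C.min' hCne, C.max' hCne, A.min' hAne, A.max' hAne, isMinOf_min' _, isMaxOf_max' _,
      isMinOf_min' _, isMaxOf_max' _, ?_, ?_⟩
    · rw [Fin.le_def]; have := Fin.le_def.mp (C.min'_le u hu); omega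
    · rw [Fin.le_def]; have := Fin.le_def.mp (C.le_max' v hv); omega
  have hCP := hall C hC hCA hCembrA
  obtain ⟨hm1, hm2⟩ := embraces_bounds hCP hCne hPne
  obtain ⟨hm3, hm4⟩ := embraces_bounds hPembr hPne hAne
  have hCeqP : C = P → False := by
    intro h
    exact hCApar u hu _ (A.min'_mem hAne) (hPApar u (by rwa [← h]) _ (A.min'_mem hAne))
  have hmPA : (P.min' hPne).val ≠ (A.min' hAne).val := by
    intro h
    exact hPA (θ.eq_of_mem_parts hPmem hA
      (by rw [← Fin.val_injective h]; exact P.min'_mem hPne) (A.min'_mem hAne))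
  have hmPv : (P.min' hPne).val < u.val := by
    have hpar := hPApar _ (P.min'_mem hPne) _ (A.min'_mem hAne)
    have hle := Fin.le_def.mp hm3
    omega
  have hMPA : (P.max' hPne).val ≠ (A.max' hAne).val := by
    intro h
    exact hPA (θ.eq_of_mem_parts hPmem hA
      (by rw [← Fin.val_injective h]; exact P.max'_mem hPne) (A.max'_mem hAne))
  have hMPv : v.val < (P.max' hPne).val := by
    have hpar := hPApar _ (P.max'_mem hPne) _ (A.max'_mem hAne)
    have hle := Fin.le_def.mp hm4
    omega
  have hCPmin : C.min' hCne < P.min' hPne := by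
    rcases eq_or_lt_of_le hm1 with h | h
    · exact absurd (θ.eq_of_mem_parts hC hPmem (C.min'_mem hCne)
        (by rw [h]; exact P.min'_mem hPne)) (fun hh => hCeqP hh)
    · exact h
  have hminAmaxA := Fin.le_def.mp (A.min'_le _ (A.max'_mem hAne))
  have hcross := hNC (C.min' hCne) (P.min' hPne) u (P.max' hPne) hCPmin
    (by rw [Fin.lt_def]; omega)
    (by rw [Fin.lt_def]; omega)
    ⟨C, hC, C.min'_mem hCne, hu⟩ ⟨P, hPmem, P.min'_mem hPne, P.max'_mem hPne⟩
  obtain ⟨E, hE, h1E, h2E⟩ := hcross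
  exact hCeqP ((θ.eq_of_mem_parts hC hE (C.min'_mem hCne) h1E).trans
    (θ.eq_of_mem_parts hE hPmem h2E (P.min'_mem hPne)))

/-- Lemma 6.6: for `π ∈ NC(n)` with Kreweras complement `κ = K(π)`,
the partition `θ = π^(odd) ∪ κ^(even)` is a parity-preserving partition in `NC(2n)`,
it has exactly two outer blocks, and the parent of every non-outer block of `θ` has
parity opposite from the block itself. -/
theorem statement14 (n : ℕ) (hn : 0 < n) (π κ : FP n) (hπ : IsNC π)
    (hκ : IsKrewerasPair π κ) (θ : FP (2*n)) (hθ : IsOddEvenJoin π κ θ) :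
    IsNC θ ∧ ParityPreserving θ ∧ ExactlyTwoOuterBlocks θ ∧
      ∀ A ∈ θ.parts, ¬ IsOuter θ A → ∀ P, IsParent θ A P → OppositeParity A P := by
  obtain ⟨σπ, σκ, hπa, hκa, heq⟩ := hκ
  have hcomp : ∀ x, σπ (σκ x) = finRotate n x := by
    intro x
    rw [heq]
    simp [Equiv.Perm.mul_apply]
  have hθ' : θ.parts = π.parts.image (fun B => B.image oddEmb) ∪
      κ.parts.image (fun B => B.image evenEmb) := hθ
  have hparts : ∀ T ∈ θ.parts, (∃ B ∈ π.parts, T = B.image oddEmb) ∨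
      (∃ D ∈ κ.parts, T = D.image evenEmb) := by
    intro T hT
    rw [hθ', Finset.mem_union] at hT
    rcases hT with h | h
    · obtain ⟨B, hB, hBT⟩ := Finset.mem_image.mp h
      exact Or.inl ⟨B, hB, hBT.symm⟩
    · obtain ⟨D, hD, hDT⟩ := Finset.mem_image.mp h
      exact Or.inr ⟨D, hD, hDT.symm⟩
  have hoddmem : ∀ B ∈ π.parts, B.image oddEmb ∈ θ.parts := by
    intro B hB
    rw [hθ']
    exact Finset.mem_union_left _ (Finset.mem_image_of_mem _ hB)
  have hevenmem : ∀ D ∈ κ.parts, D.image evenEmb ∈ θ.parts := by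
    intro D hD
    rw [hθ']
    exact Finset.mem_union_right _ (Finset.mem_image_of_mem _ hD)
  have hoddblk : ∀ B : Finset (Fin n), OddBlock (B.image oddEmb) := by
    intro B x hx
    obtain ⟨a, -, rfl⟩ := Finset.mem_image.mp hx
    show 2 * a.val % 2 = 0
    omega
  have hevenblk : ∀ D : Finset (Fin n), EvenBlock (D.image evenEmb) := by
    intro D x hx
    obtain ⟨a, -, rfl⟩ := Finset.mem_image.mp hx
    show (2 * a.val + 1) % 2 = 1
    omega
  have hmono_odd : Monotone (oddEmb (n := n)) := by
    intro x y h
    rw [Fin.le_def] at h ⊢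
    show 2 * x.val ≤ 2 * y.val
    omega
  have hmono_even : Monotone (evenEmb (n := n)) := by
    intro x y h
    rw [Fin.le_def] at h ⊢
    show 2 * x.val + 1 ≤ 2 * y.val + 1
    omega
  have hPP : ParityPreserving θ := by
    intro T hT
    rcases hparts T hT with ⟨B, hB, rfl⟩ | ⟨D, hD, rfl⟩
    · exact Or.inl (hoddblk B)
    · exact Or.inr (hevenblk D)
  have hNC : IsNC θ := by
    intro i j k l hij hjk hkl hik hjl
    obtain ⟨T, hT, hiT, hkT⟩ := hik
    obtain ⟨U, hU, hjU, hlU⟩ := hjl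
    rcases hparts T hT with ⟨B, hB, rfl⟩ | ⟨D, hD, rfl⟩ <;>
      rcases hparts U hU with ⟨B₂, hB₂, rfl⟩ | ⟨D₂, hD₂, rfl⟩
    · obtain ⟨a, haB, rfl⟩ := Finset.mem_image.mp hiT
      obtain ⟨c, hcB, rfl⟩ := Finset.mem_image.mp hkT
      obtain ⟨b, hbB, rfl⟩ := Finset.mem_image.mp hjU
      obtain ⟨d, hdB, rfl⟩ := Finset.mem_image.mp hlU
      have h1 : (2 * a.val : ℕ) < 2 * b.val := Fin.lt_def.mp hij
      have h2 : (2 * b.val : ℕ) < 2 * c.val := Fin.lt_def.mp hjk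
      have h3 : (2 * c.val : ℕ) < 2 * d.val := Fin.lt_def.mp hkl
      obtain ⟨E, hE, haE, hbE⟩ := hπ a b c d (Fin.lt_def.mpr (by omega))
        (Fin.lt_def.mpr (by omega)) (Fin.lt_def.mpr (by omega))
        ⟨B, hB, haB, hcB⟩ ⟨B₂, hB₂, hbB, hdB⟩
      exact ⟨E.image oddEmb, hoddmem E hE, Finset.mem_image_of_mem _ haE,
        Finset.mem_image_of_mem _ hbE⟩
    · obtain ⟨a, haB, rfl⟩ := Finset.mem_image.mp hiT
      obtain ⟨c, hcB, rfl⟩ := Finset.mem_image.mp hkT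
      obtain ⟨b, hbD, rfl⟩ := Finset.mem_image.mp hjU
      obtain ⟨d, hdD, rfl⟩ := Finset.mem_image.mp hlU
      have h1 : (2 * a.val : ℕ) < 2 * b.val + 1 := Fin.lt_def.mp hij
      have h2 : (2 * b.val + 1 : ℕ) < 2 * c.val := Fin.lt_def.mp hjk
      have h3 : (2 * c.val : ℕ) < 2 * d.val + 1 := Fin.lt_def.mp hkl
      exact (lemH1 hπ hπa hκa hcomp (a := a) (b := b) (c := c) (d := d)
        (Fin.le_def.mpr (by omega)) (Fin.lt_def.mpr (by omega)) (Fin.le_def.mpr (by omega))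
        ⟨B, hB, haB, hcB⟩ ⟨D₂, hD₂, hbD, hdD⟩).elim
    · obtain ⟨a, haD, rfl⟩ := Finset.mem_image.mp hiT
      obtain ⟨c, hcD, rfl⟩ := Finset.mem_image.mp hkT
      obtain ⟨b, hbB, rfl⟩ := Finset.mem_image.mp hjU
      obtain ⟨d, hdB, rfl⟩ := Finset.mem_image.mp hlU
      have h1 : (2 * a.val + 1 : ℕ) < 2 * b.val := Fin.lt_def.mp hij
      have h2 : (2 * b.val : ℕ) < 2 * c.val + 1 := Fin.lt_def.mp hjk
      have h3 : (2 * c.val + 1 : ℕ) < 2 * d.val := Fin.lt_def.mp hkl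
      exact (lemH2 hπ hπa hκa hcomp (a := a) (b := b) (c := c) (d := d)
        (Fin.lt_def.mpr (by omega)) (Fin.le_def.mpr (by omega)) (Fin.lt_def.mpr (by omega))
        ⟨D, hD, haD, hcD⟩ ⟨B₂, hB₂, hbB, hdB⟩).elim
    · obtain ⟨a, haD, rfl⟩ := Finset.mem_image.mp hiT
      obtain ⟨c, hcD, rfl⟩ := Finset.mem_image.mp hkT
      obtain ⟨b, hbD, rfl⟩ := Finset.mem_image.mp hjU
      obtain ⟨d, hdD, rfl⟩ := Finset.mem_image.mp hlU
      have h1 : (2 * a.val + 1 : ℕ) < 2 * b.val + 1 := Fin.lt_def.mp hij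
      have h2 : (2 * b.val + 1 : ℕ) < 2 * c.val + 1 := Fin.lt_def.mp hjk
      have h3 : (2 * c.val + 1 : ℕ) < 2 * d.val + 1 := Fin.lt_def.mp hkl
      obtain ⟨E, hE, haE, hbE⟩ := kappaNC hπ hπa hκa hcomp a b c d
        (Fin.lt_def.mpr (by omega)) (Fin.lt_def.mpr (by omega)) (Fin.lt_def.mpr (by omega))
        ⟨D, hD, haD, hcD⟩ ⟨D₂, hD₂, hbD, hdD⟩
      exact ⟨E.image evenEmb, hevenmem E hE, Finset.mem_image_of_mem _ haE,
        Finset.mem_image_of_mem _ hbE⟩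
  have h2n : 0 < 2 * n := by omega
  set z0 : Fin (2 * n) := ⟨0, h2n⟩ with hz0def
  set zl : Fin (2 * n) := ⟨2 * n - 1, by omega⟩ with hzldef
  have hz0v : z0.val = 0 := rfl
  have hzlv : zl.val = 2 * n - 1 := rfl
  have hn0 : 0 < n := hn
  -- tight embracing blocks
  have tight_odd : ∀ B ∈ π.parts, z0 ∉ B.image oddEmb →
      ∃ C ∈ θ.parts, EvenBlock C ∧ ∃ u ∈ C, ∃ v ∈ C,
        ∀ hAne : (B.image oddEmb).Nonempty,
          u.val + 1 = ((B.image oddEmb).min' hAne).val ∧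
          v.val = ((B.image oddEmb).max' hAne).val + 1 := by
    intro B hB h0
    have hBne : B.Nonempty := π.nonempty_of_mem_parts hB
    have ha1lt : (B.min' hBne).val < n := (B.min' hBne).isLt
    have ha1pos : 0 < (B.min' hBne).val := by
      by_contra hcon
      push_neg at hcon
      apply h0
      have hz : z0 = oddEmb (B.min' hBne) := Fin.val_injective (by
        show (0 : ℕ) = 2 * (B.min' hBne).val
        omega)
      rw [hz]
      exact Finset.mem_image_of_mem _ (B.min'_mem hBne)
    set e : Fin n := ⟨(B.min' hBne).val - 1, by omega⟩ with hedef
    have heval : e.val = (B.min' hBne).val - 1 := rfl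
    have hσa2 : σπ (B.max' hBne) = B.min' hBne := by
      rcases (hπa B hB _ (B.max'_mem hBne)).2 with h' | h'
      · exact absurd (B.le_max' _ (hπa B hB _ (B.max'_mem hBne)).1) (not_le.mpr h'.1)
      · exact isMinOf_eq h'.2 hBne
    have hσκe : σκ e = B.max' hBne := by
      apply σπ.injective
      rw [hcomp e, hσa2]
      apply Fin.val_injective
      rw [finRotate_val (by omega)]
      omega
    obtain ⟨D, hD, heD⟩ := κ.exists_mem (Finset.mem_univ e)
    have ha2D : B.max' hBne ∈ D := by rw [← hσκe]; exact assoc_mem hκa hD heD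
    refine ⟨D.image evenEmb, hevenmem D hD, hevenblk D, evenEmb e,
      Finset.mem_image_of_mem _ heD, evenEmb (B.max' hBne),
      Finset.mem_image_of_mem _ ha2D, ?_⟩
    intro hAne
    have hminA : (B.image oddEmb).min' hAne = oddEmb (B.min' hBne) := by
      refine (isMinOf_eq ⟨Finset.mem_image_of_mem _ (B.min'_mem hBne), ?_⟩ hAne).symm
      intro y hy
      obtain ⟨x, hx, rfl⟩ := Finset.mem_image.mp hy
      exact hmono_odd (B.min'_le x hx)
    have hmaxA : (B.image oddEmb).max' hAne = oddEmb (B.max' hBne) := by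
      refine (isMaxOf_eq ⟨Finset.mem_image_of_mem _ (B.max'_mem hBne), ?_⟩ hAne).symm
      intro y hy
      obtain ⟨x, hx, rfl⟩ := Finset.mem_image.mp hy
      exact hmono_odd (B.le_max' x hx)
    rw [hminA, hmaxA]
    constructor
    · show 2 * e.val + 1 + 1 = 2 * (B.min' hBne).val
      omega
    · show 2 * (B.max' hBne).val + 1 = 2 * (B.max' hBne).val + 1
      rfl
  have tight_even : ∀ D ∈ κ.parts, zl ∉ D.image evenEmb →
      ∃ C ∈ θ.parts, OddBlock C ∧ ∃ u ∈ C, ∃ v ∈ C,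
        ∀ hAne : (D.image evenEmb).Nonempty,
          u.val + 1 = ((D.image evenEmb).min' hAne).val ∧
          v.val = ((D.image evenEmb).max' hAne).val + 1 := by
    intro D hD hl
    have hDne : D.Nonempty := κ.nonempty_of_mem_parts hD
    have hd2lt : (D.max' hDne).val + 1 < n := by
      have h1 := (D.max' hDne).isLt
      by_contra hcon
      push_neg at hcon
      apply hl
      have hz : zl = evenEmb (D.max' hDne) := Fin.val_injective (by
        show 2 * n - 1 = 2 * (D.max' hDne).val + 1
        omega)
      rw [hz]
      exact Finset.mem_image_of_mem _ (D.max'_mem hDne)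
    set v' : Fin n := ⟨(D.max' hDne).val + 1, hd2lt⟩ with hv'def
    have hv'val : v'.val = (D.max' hDne).val + 1 := rfl
    have hσκd2 : σκ (D.max' hDne) = D.min' hDne := by
      rcases (hκa D hD _ (D.max'_mem hDne)).2 with h' | h'
      · exact absurd (D.le_max' _ (hκa D hD _ (D.max'_mem hDne)).1) (not_le.mpr h'.1)
      · exact isMinOf_eq h'.2 hDne
    have hσd1 : σπ (D.min' hDne) = v' := by
      have h := hcomp (D.max' hDne)
      rw [hσκd2] at h
      rw [h]
      apply Fin.val_injective
      rw [finRotate_val hd2lt]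
    obtain ⟨B, hB, hd1B⟩ := π.exists_mem (Finset.mem_univ (D.min' hDne))
    have hv'B : v' ∈ B := by rw [← hσd1]; exact assoc_mem hπa hB hd1B
    refine ⟨B.image oddEmb, hoddmem B hB, hoddblk B, oddEmb (D.min' hDne),
      Finset.mem_image_of_mem _ hd1B, oddEmb v', Finset.mem_image_of_mem _ hv'B, ?_⟩
    intro hAne
    have hminA : (D.image evenEmb).min' hAne = evenEmb (D.min' hDne) := by
      refine (isMinOf_eq ⟨Finset.mem_image_of_mem _ (D.min'_mem hDne), ?_⟩ hAne).symm
      intro y hy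
      obtain ⟨x, hx, rfl⟩ := Finset.mem_image.mp hy
      exact hmono_even (D.min'_le x hx)
    have hmaxA : (D.image evenEmb).max' hAne = evenEmb (D.max' hDne) := by
      refine (isMaxOf_eq ⟨Finset.mem_image_of_mem _ (D.max'_mem hDne), ?_⟩ hAne).symm
      intro y hy
      obtain ⟨x, hx, rfl⟩ := Finset.mem_image.mp hy
      exact hmono_even (D.le_max' x hx)
    rw [hminA, hmaxA]
    constructor
    · show 2 * (D.min' hDne).val + 1 = 2 * (D.min' hDne).val + 1
      rfl
    · show 2 * v'.val = 2 * (D.max' hDne).val + 1 + 1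
      omega
  -- the two outer blocks
  obtain ⟨M, hM, hz0M⟩ := θ.exists_mem (Finset.mem_univ z0)
  obtain ⟨N, hN, hzlN⟩ := θ.exists_mem (Finset.mem_univ zl)
  have hMN : M ≠ N := by
    intro h
    rcases hPP M hM with hOdd | hEven
    · have hx := hOdd zl (by rw [h]; exact hzlN)
      rw [hzlv] at hx
      omega
    · have hx := hEven z0 hz0M
      rw [hz0v] at hx
      omega
  have hMout : IsOuter θ M := by
    refine ⟨hM, ?_⟩
    rintro ⟨W, hW, b1, b2, a1, a2, hb1, hb2, ha1, ha2, hlt1, hlt2⟩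
    have hx1 := Fin.le_def.mp (ha1.2 z0 hz0M)
    have hx2 := Fin.lt_def.mp hlt1
    rw [hz0v] at hx1
    omega
  have hNout : IsOuter θ N := by
    refine ⟨hN, ?_⟩
    rintro ⟨W, hW, b1, b2, a1, a2, hb1, hb2, ha1, ha2, hlt1, hlt2⟩
    have hx1 := Fin.le_def.mp (ha2.2 zl hzlN)
    have hx2 := Fin.lt_def.mp hlt2
    have hx3 := b2.isLt
    rw [hzlv] at hx1
    omega
  have huniq : ∀ A ∈ θ.parts, IsOuter θ A → A = M ∨ A = N := by
    intro A hA hout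
    by_contra hcon
    push_neg at hcon
    obtain ⟨hAM, hAN⟩ := hcon
    rcases hparts A hA with ⟨B, hB, rfl⟩ | ⟨D, hD, rfl⟩
    · have h0 : z0 ∉ B.image oddEmb := fun h =>
        hAM (θ.eq_of_mem_parts hA hM h hz0M)
      obtain ⟨C, hC, -, u, hu, v, hv, hval⟩ := tight_odd B hB h0
      have hAne : (B.image oddEmb).Nonempty := θ.nonempty_of_mem_parts hA
      exact hout.2 ⟨C, hC, strict_of_tight hAne hu hv (hval hAne).1 (hval hAne).2⟩
    · have hl : zl ∉ D.image evenEmb := fun h =>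
        hAN (θ.eq_of_mem_parts hA hN h hzlN)
      obtain ⟨C, hC, -, u, hu, v, hv, hval⟩ := tight_even D hD hl
      have hAne : (D.image evenEmb).Nonempty := θ.nonempty_of_mem_parts hA
      exact hout.2 ⟨C, hC, strict_of_tight hAne hu hv (hval hAne).1 (hval hAne).2⟩
  -- parent parity
  have hpar : ∀ A ∈ θ.parts, ¬ IsOuter θ A → ∀ P, IsParent θ A P → OppositeParity A P := by
    intro A hA hnout P hPar
    have hAne : A.Nonempty := θ.nonempty_of_mem_parts hA
    have hW : ∃ W ∈ θ.parts, StrictlyEmbraces W A := by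
      by_contra h
      exact hnout ⟨hA, h⟩
    obtain ⟨W, hWmem, b1, b2, a1, a2, hb1, hb2, ha1, ha2, hlt1, hlt2⟩ := hW
    have hz0A : z0 ∉ A := by
      intro h
      have hx1 := Fin.le_def.mp (ha1.2 z0 h)
      have hx2 := Fin.lt_def.mp hlt1
      rw [hz0v] at hx1
      omega
    have hzlA : zl ∉ A := by
      intro h
      have hx1 := Fin.le_def.mp (ha2.2 zl h)
      have hx2 := Fin.lt_def.mp hlt2
      have hx3 := b2.isLt
      rw [hzlv] at hx1
      omega
    rcases hparts A hA with ⟨B, hB, rfl⟩ | ⟨D, hD, rfl⟩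
    · obtain ⟨C, hC, hCev, u, hu, v, hv, hval⟩ := tight_odd B hB hz0A
      rcases hPP P hPar.1 with hPodd | hPev
      · exact (parent_core hNC hA hC hAne hu hv (hval hAne).1 (hval hAne).2 hPar
          (fun x hx y hy => by rw [hPodd x hx, hoddblk B y hy])
          (fun x hx y hy => by rw [hCev x hx, hoddblk B y hy]; omega)).elim
      · exact Or.inl ⟨hoddblk B, hPev⟩
    · obtain ⟨C, hC, hCodd, u, hu, v, hv, hval⟩ := tight_even D hD hzlA
      rcases hPP P hPar.1 with hPodd | hPev
      · exact Or.inr ⟨hevenblk D, hPodd⟩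
      · exact (parent_core hNC hA hC hAne hu hv (hval hAne).1 (hval hAne).2 hPar
          (fun x hx y hy => by rw [hPev x hx, hevenblk D y hy])
          (fun x hx y hy => by rw [hCodd x hx, hevenblk D y hy]; omega)).elim
  exact ⟨hNC, hPP, ⟨M, hM, N, hN, hMN, hMout, hNout, huniq⟩, hpar⟩
end BBP
end

section
/- Let n be a positive integer and let π, ρ ∈ NC(n) be such that θ := π^(odd) ∪ ρ^(even) is a (parity-preserving) partition in NC(2n). If θ has exactly two outer blocks and every non-outer block A of θ has Parent_θ(A) of parity opposite from the parity of A, then ρ = K(π). -/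
open Finset

attribute [local instance] Classical.propDecidable

open scoped ComplexOrder

namespace BBP

/-!
Everything is read inside `θ`, where the identity `P_π (P_ρ b) = b + 1` becomes: if `y` follows
`x` cyclically in a block of `θ`, then `x + 1` follows `y - 1` cyclically.

If `x < y` are consecutive in a block `X`, the gap between them is filled by a single block running
from `x + 1` to `y - 1`: otherwise the block just after the block of `x + 1` would have parent `X`,
which has its own parity. If `y` and `x` are the least and the greatest element of a block `E`,
either `x` is the last point, and then `y - 1` lies in the outer block of the first point, which
cannot reach past `y - 1`; or `E` is not outer, so it lies in a gap of its parent, and by the first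
case it fills that gap, which is therefore `(y - 1, x + 1)`.
-/

section Blocks

variable {m : ℕ} {θ : FP m}

lemma IsNC.eq_of_cross (hθ : IsNC θ) {X Y : Finset (Fin m)} (hX : X ∈ θ.parts)
    (hY : Y ∈ θ.parts) {i j k l : Fin m} (hi : i ∈ X) (hk : k ∈ X) (hj : j ∈ Y) (hl : l ∈ Y)
    (hij : i < j) (hjk : j < k) (hkl : k < l) : X = Y := by
  obtain ⟨Z, hZ, hiZ, hjZ⟩ := hθ i j k l hij hjk hkl ⟨X, hX, hi, hk⟩ ⟨Y, hY, hj, hl⟩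
  exact (θ.eq_of_mem_parts hX hZ hi hiZ).trans (θ.eq_of_mem_parts hZ hY hjZ hj)

lemma IsNC.mem_Ioo_of_mem_Ioo (hθ : IsNC θ) {X Y : Finset (Fin m)} (hX : X ∈ θ.parts)
    (hY : Y ∈ θ.parts) (hXY : X ≠ Y) {u v w : Fin m} (hu : u ∈ X) (hv : v ∈ X) (hw : w ∈ Y)
    (huw : u < w) (hwv : w < v) {z : Fin m} (hz : z ∈ Y) : u < z ∧ z < v := by
  have hzu : z ≠ u := fun h => hXY (θ.eq_of_mem_parts hX hY hu (h ▸ hz))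
  have hzv : z ≠ v := fun h => hXY (θ.eq_of_mem_parts hX hY hv (h ▸ hz))
  refine ⟨lt_of_le_of_ne (le_of_not_gt fun hlt => hXY ?_) hzu.symm,
    lt_of_le_of_ne (le_of_not_gt fun hlt => hXY ?_) hzv⟩
  · exact (hθ.eq_of_cross hY hX hz hw hu hv hlt huw hwv).symm
  · exact hθ.eq_of_cross hX hY hu hv hw hz huw hwv hlt

end Blocks

lemma _root_.Finset.exists_consecutive_around {α : Type*} [LinearOrder α] {s : Finset α} {y a b : α}
    (hy : y ∉ s) (ha : a ∈ s) (hay : a < y) (hb : b ∈ s) (hyb : y < b) :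
    ∃ f ∈ s, ∃ f' ∈ s, f < y ∧ y < f' ∧ ∀ z ∈ s, ¬ (f < z ∧ z < f') := by
  have hl : (s.filter (· < y)).Nonempty := ⟨a, Finset.mem_filter.2 ⟨ha, hay⟩⟩
  have hr : (s.filter (y < ·)).Nonempty := ⟨b, Finset.mem_filter.2 ⟨hb, hyb⟩⟩
  obtain ⟨hfs, hfy⟩ := Finset.mem_filter.1 ((s.filter (· < y)).max'_mem hl)
  obtain ⟨hf's, hyf'⟩ := Finset.mem_filter.1 ((s.filter (y < ·)).min'_mem hr)
  refine ⟨_, hfs, _, hf's, hfy, hyf', fun z hz ⟨hfz, hzf'⟩ => ?_⟩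
  rcases lt_trichotomy z y with hzy | rfl | hyz
  · exact absurd ((s.filter (· < y)).le_max' z (Finset.mem_filter.2 ⟨hz, hzy⟩)) (not_le.2 hfz)
  · exact hy hz
  · exact absurd ((s.filter (y < ·)).min'_le z (Finset.mem_filter.2 ⟨hz, hyz⟩)) (not_le.2 hzf')

lemma val_finRotate {m : ℕ} (x : Fin m) : (finRotate m x).val = (x.val + 1) % m := by
  have := x.neZero
  rw [finRotate_apply, Fin.val_add, Fin.val_one', Nat.add_mod_mod]

section Embracing

variable {m : ℕ}

lemma embraces_iff {A B : Finset (Fin m)} (hB : B.Nonempty) :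
    Embraces A B ↔ (∃ a ∈ A, ∀ b ∈ B, a ≤ b) ∧ ∃ a ∈ A, ∀ b ∈ B, b ≤ a := by
  constructor
  · rintro ⟨a₁, a₂, b₁, b₂, ha₁, ha₂, hb₁, hb₂, h₁, h₂⟩
    exact ⟨⟨a₁, ha₁.1, fun b hb => h₁.trans (hb₁.2 b hb)⟩,
      ⟨a₂, ha₂.1, fun b hb => (hb₂.2 b hb).trans h₂⟩⟩
  · rintro ⟨⟨a, ha, hle⟩, ⟨a', ha', hge⟩⟩
    exact ⟨A.min' ⟨a, ha⟩, A.max' ⟨a, ha⟩, B.min' hB, B.max' hB,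
      ⟨A.min'_mem _, fun x hx => A.min'_le x hx⟩, ⟨A.max'_mem _, fun x hx => A.le_max' x hx⟩,
      ⟨B.min'_mem _, fun x hx => B.min'_le x hx⟩, ⟨B.max'_mem _, fun x hx => B.le_max' x hx⟩,
      (A.min'_le a ha).trans (hle _ (B.min'_mem hB)),
      (hge _ (B.max'_mem hB)).trans (A.le_max' a' ha')⟩

lemma strictlyEmbraces_iff {A B : Finset (Fin m)} (hA : A.Nonempty) :
    StrictlyEmbraces B A ↔ (∃ b ∈ B, ∀ a ∈ A, b < a) ∧ ∃ b ∈ B, ∀ a ∈ A, a < b := by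
  constructor
  · rintro ⟨b₁, b₂, a₁, a₂, hb₁, hb₂, ha₁, ha₂, h₁, h₂⟩
    exact ⟨⟨b₁, hb₁.1, fun a ha => h₁.trans_le (ha₁.2 a ha)⟩,
      ⟨b₂, hb₂.1, fun a ha => (ha₂.2 a ha).trans_lt h₂⟩⟩
  · rintro ⟨⟨b, hb, hlt⟩, ⟨b', hb', hgt⟩⟩
    exact ⟨B.min' ⟨b, hb⟩, B.max' ⟨b, hb⟩, A.min' hA, A.max' hA,
      ⟨B.min'_mem _, fun x hx => B.min'_le x hx⟩, ⟨B.max'_mem _, fun x hx => B.le_max' x hx⟩,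
      ⟨A.min'_mem _, fun x hx => A.min'_le x hx⟩, ⟨A.max'_mem _, fun x hx => A.le_max' x hx⟩,
      (B.min'_le b hb).trans_lt (hlt _ (A.min'_mem hA)),
      (hgt _ (A.max'_mem hA)).trans_le (B.le_max' b' hb')⟩

lemma Embraces.exists_le {A B : Finset (Fin m)} (h : Embraces A B) : ∃ a ∈ A, ∀ b ∈ B, a ≤ b :=
  let ⟨_, _, _, _, ha₁, _, hb₁, _, h₁, _⟩ := h
  ⟨_, ha₁.1, fun b hb => h₁.trans (hb₁.2 b hb)⟩

lemma Embraces.exists_ge {A B : Finset (Fin m)} (h : Embraces A B) : ∃ a ∈ A, ∀ b ∈ B, b ≤ a :=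
  let ⟨_, _, _, _, _, ha₂, _, hb₂, _, h₂⟩ := h
  ⟨_, ha₂.1, fun b hb => (hb₂.2 b hb).trans h₂⟩

variable {θ : FP m}

lemma IsNC.exists_isParent (hθ : IsNC θ) {A : Finset (Fin m)} (hA : A ∈ θ.parts)
    (hout : ¬ IsOuter θ A) : ∃ P, IsParent θ A P := by
  have hAne := θ.nonempty_of_mem_parts hA
  obtain ⟨X, hX, hXA⟩ : ∃ X ∈ θ.parts, StrictlyEmbraces X A := by
    by_contra h
    exact hout ⟨hA, h⟩
  set S := θ.parts.filter fun X => X ≠ A ∧ Embraces X A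
  have hXS : X ∈ S := by
    obtain ⟨⟨b, hb, hlt⟩, ⟨b', hb', hgt⟩⟩ := (strictlyEmbraces_iff hAne).1 hXA
    refine Finset.mem_filter.2 ⟨hX, ?_, (embraces_iff hAne).2
      ⟨⟨b, hb, fun a ha => (hlt a ha).le⟩, ⟨b', hb', fun a ha => (hgt a ha).le⟩⟩⟩
    rintro rfl
    exact lt_irrefl _ (hlt b hb)
  -- the innermost embracer is the one whose least element is largest
  obtain ⟨P, hPS, hPmax⟩ := S.exists_max_image Finset.min ⟨X, hXS⟩
  obtain ⟨hP, hPA, hPe⟩ := Finset.mem_filter.1 hPS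
  refine ⟨P, hP, hPA, hPe, fun A' hA' hA'A hA'e => ?_⟩
  have hPne := θ.nonempty_of_mem_parts hP
  have hA'ne := θ.nonempty_of_mem_parts hA'
  have hmin : ∀ p ∈ P, A'.min' hA'ne ≤ p := fun p hp => WithTop.coe_le_coe.1 <| by
    rw [Finset.coe_min']
    exact (hPmax A' (Finset.mem_filter.2 ⟨hA', hA'A, hA'e⟩)).trans (Finset.min_le hp)
  refine (embraces_iff hPne).2 ⟨⟨_, A'.min'_mem hA'ne, hmin⟩, ⟨_, A'.max'_mem hA'ne, ?_⟩⟩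
  by_contra! ⟨p, hp, hlt⟩
  have hA'P : A' ≠ P := by
    rintro rfl
    exact not_le.2 hlt (A'.le_max' p hp)
  obtain ⟨a, ha⟩ := hAne
  obtain ⟨q, hq, hqA⟩ := hPe.exists_le
  obtain ⟨q', hq', hq'A⟩ := hA'e.exists_ge
  have h₁ : A'.min' hA'ne < P.min' hPne := lt_of_le_of_ne (hmin _ (P.min'_mem hPne))
    fun h => hA'P (θ.eq_of_mem_parts hA' hP (A'.min'_mem hA'ne) (h ▸ P.min'_mem hPne))
  have h₂ : P.min' hPne < A'.max' hA'ne := lt_of_le_of_ne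
    (((P.min'_le q hq).trans (hqA a ha)).trans ((hq'A a ha).trans (A'.le_max' q' hq')))
    fun h => hA'P (θ.eq_of_mem_parts hA' hP (A'.max'_mem hA'ne) (h ▸ P.min'_mem hPne))
  exact hA'P (hθ.eq_of_cross hA' hP (A'.min'_mem hA'ne) (A'.max'_mem hA'ne) (P.min'_mem hPne)
    hp h₁ h₂ hlt)

lemma ExactlyTwoOuterBlocks.not_isOuter (h2 : ExactlyTwoOuterBlocks θ) {z w : Fin m}
    (hz : ∀ i, z ≤ i) (hw : ∀ i, i ≤ w) {X : Finset (Fin m)} (hX : X ∈ θ.parts)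
    (hzX : z ∉ X) (hwX : w ∉ X) : ¬ IsOuter θ X := by
  intro hXo
  have hZ := θ.part_mem.2 (Finset.mem_univ z)
  have hW := θ.part_mem.2 (Finset.mem_univ w)
  have hzZ := θ.mem_part (Finset.mem_univ z)
  have hwW := θ.mem_part (Finset.mem_univ w)
  have hZo : IsOuter θ (θ.part z) := by
    refine ⟨hZ, fun ⟨Y, _, hY⟩ => ?_⟩
    obtain ⟨⟨b, _, hb⟩, -⟩ := (strictlyEmbraces_iff ⟨z, hzZ⟩).1 hY
    exact not_le.2 (hb z hzZ) (hz b)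
  have hWo : IsOuter θ (θ.part w) := by
    refine ⟨hW, fun ⟨Y, _, hY⟩ => ?_⟩
    obtain ⟨-, ⟨b, _, hb⟩⟩ := (strictlyEmbraces_iff ⟨w, hwW⟩).1 hY
    exact not_le.2 (hb w hwW) (hw b)
  have hXZ : X ≠ θ.part z := fun h => hzX (h ▸ hzZ)
  have hXW : X ≠ θ.part w := fun h => hwX (h ▸ hwW)
  -- with only two outer blocks, `z` and `w` share the outer block other than `X`
  have hZW : θ.part z = θ.part w := by
    obtain ⟨M, -, N, -, -, -, -, huniq⟩ := h2
    rcases huniq X hX hXo with rfl | rfl <;> rcases huniq _ hZ hZo with h | h <;>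
      rcases huniq _ hW hWo with h' | h' <;> simp_all
  refine hXo.2 ⟨θ.part z, hZ, (strictlyEmbraces_iff (θ.nonempty_of_mem_parts hX)).2
    ⟨⟨z, hzZ, fun x hx => lt_of_le_of_ne (hz x) fun h => hzX (h ▸ hx)⟩,
      ⟨w, hZW ▸ hwW, fun x hx => lt_of_le_of_ne (hw x) fun h => hwX (h ▸ hx)⟩⟩⟩

end Embracing

section Parity

variable {m : ℕ} {θ : FP m}

def ParentsAlternate (θ : FP m) : Prop :=
  ∀ A ∈ θ.parts, ¬ IsOuter θ A → ∀ P, IsParent θ A P → OppositeParity A P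

lemma ParityPreserving.mod_two_eq (hpp : ParityPreserving θ) {X : Finset (Fin m)}
    (hX : X ∈ θ.parts) {a b : Fin m} (ha : a ∈ X) (hb : b ∈ X) : a.val % 2 = b.val % 2 := by
  rcases hpp X hX with h | h <;> rw [h a ha, h b hb]

lemma OppositeParity.mod_two_ne {A P : Finset (Fin m)} (h : OppositeParity A P) {a p : Fin m}
    (ha : a ∈ A) (hp : p ∈ P) : a.val % 2 ≠ p.val % 2 := by
  rcases h with ⟨hA, hP⟩ | ⟨hA, hP⟩ <;> rw [hA a ha, hP p hp] <;> decide

lemma IsNC.parent_eq_of_gap (hθ : IsNC θ) {X O E P : Finset (Fin m)} (hX : X ∈ θ.parts)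
    (hO : O ∈ θ.parts) (hE : E ∈ θ.parts) (hP : IsParent θ E P) (hXE : X ≠ E)
    (hXeE : Embraces X E) {u a p q : Fin m} (hu : u ∈ X) (haO : a ∈ O)
    (ha : u.val + 1 = a.val) (hpO : p ∈ O) (hpmax : ∀ z ∈ O, z ≤ p) (hqE : q ∈ E)
    (hq : p.val + 1 = q.val) : P = X := by
  obtain ⟨hPθ, hPE, hPeE, hPinner⟩ := hP
  obtain ⟨p₁, hp₁, hp₁E⟩ := hPeE.exists_le
  obtain ⟨p₂, hp₂, hp₂E⟩ := hPeE.exists_ge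
  have hp₁q : p₁ < q :=
    lt_of_le_of_ne (hp₁E q hqE) fun h => hPE (θ.eq_of_mem_parts hPθ hE hp₁ (h ▸ hqE))
  have hpp₂ : p < p₂ := Fin.lt_def.2 (by
    have := Fin.le_def.1 (hp₂E q hqE)
    have : q ≠ p₂ := fun h => hPE (θ.eq_of_mem_parts hPθ hE hp₂ (h ▸ hqE))
    have : q.val ≠ p₂.val := fun h => this (Fin.ext h)
    omega)
  have hOP : O ≠ P := fun h => not_le.2 hpp₂ (hpmax p₂ (h ▸ hp₂))
  rcases lt_trichotomy p₁ u with hp₁u | rfl | hup₁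
  · by_contra hPX
    obtain ⟨e, he, heP⟩ := (hPinner X hX hXE hXeE).exists_le
    have hep₁ : e < p₁ :=
      lt_of_le_of_ne (heP p₁ hp₁) fun h => hPX (θ.eq_of_mem_parts hPθ hX hp₁ (h ▸ he))
    have hup₂ : u < p₂ := ((Fin.lt_def.2 (by omega) : u < a).trans_le (hpmax a haO)).trans hpp₂
    exact hPX (hθ.eq_of_cross hX hPθ he hu hp₁ hp₂ hep₁ hp₁u hup₂).symm
  · exact θ.eq_of_mem_parts hPθ hX hp₁ hu
  · have hap₁ : a < p₁ := lt_of_le_of_ne (Fin.le_def.2 (by have := Fin.lt_def.1 hup₁; omega))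
      fun h => hOP (θ.eq_of_mem_parts hO hPθ haO (h ▸ hp₁))
    have hp₁p : p₁ < p := lt_of_le_of_ne (Fin.le_def.2 (by have := Fin.lt_def.1 hp₁q; omega))
      fun h => hOP (θ.eq_of_mem_parts hO hPθ hpO (h ▸ hp₁))
    exact absurd (hθ.eq_of_cross hO hPθ haO hpO hp₁ hp₂ hap₁ hp₁p hpp₂) hOP

theorem part_succ_fills_gap (hθ : IsNC θ) (hpp : ParityPreserving θ) (hpar : ParentsAlternate θ)
    {X : Finset (Fin m)} (hX : X ∈ θ.parts) {u v : Fin m} (hu : u ∈ X) (hv : v ∈ X)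
    (huv : u < v) (hgap : ∀ z ∈ X, ¬ (u < z ∧ z < v)) {a b : Fin m} (ha : u.val + 1 = a.val)
    (hb : b.val + 1 = v.val) : b ∈ θ.part a ∧ ∀ z ∈ θ.part a, u < z ∧ z < v := by
  set O := θ.part a
  have hO : O ∈ θ.parts := θ.part_mem.2 (Finset.mem_univ a)
  have haO : a ∈ O := θ.mem_part (Finset.mem_univ a)
  have haX : a ∉ X := fun h => by have := hpp.mod_two_eq hX hu h; omega
  have hav : a < v := lt_of_le_of_ne (Fin.le_def.2 (by have := Fin.lt_def.1 huv; omega))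
    fun h => haX (h ▸ hv)
  have hin : ∀ z ∈ O, u < z ∧ z < v := fun z hz =>
    hθ.mem_Ioo_of_mem_Ioo hX hO (fun h => haX (h ▸ haO)) hu hv haO (Fin.lt_def.2 (by omega))
      hav hz
  refine ⟨?_, hin⟩
  -- otherwise the block `E` just after `O` has parent `X`, of the same parity as `E`
  by_contra hbO
  set p := O.max' ⟨a, haO⟩
  have hpO : p ∈ O := O.max'_mem _
  have hpb : p.val + 1 < v.val := by
    have := Fin.lt_def.1 (hin p hpO).2
    have : p.val ≠ b.val := fun h => hbO (Fin.ext h ▸ hpO)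
    omega
  set q : Fin m := ⟨p.val + 1, by omega⟩
  set E := θ.part q
  have hE : E ∈ θ.parts := θ.part_mem.2 (Finset.mem_univ q)
  have hqE : q ∈ E := θ.mem_part (Finset.mem_univ q)
  have huq : u < q := Fin.lt_def.2 (by have := Fin.le_def.1 (O.le_max' a haO); simp [q]; omega)
  have hqv : q < v := Fin.lt_def.2 hpb
  have hXE : X ≠ E := fun h => hgap q (h ▸ hqE) ⟨huq, hqv⟩
  have hEin : ∀ z ∈ E, u < z ∧ z < v := fun z hz =>
    hθ.mem_Ioo_of_mem_Ioo hX hE hXE hu hv hqE huq hqv hz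
  have hEout : ¬ IsOuter θ E := fun h => h.2 ⟨X, hX, (strictlyEmbraces_iff ⟨q, hqE⟩).2
    ⟨⟨u, hu, fun z hz => (hEin z hz).1⟩, ⟨v, hv, fun z hz => (hEin z hz).2⟩⟩⟩
  obtain ⟨P, hP⟩ := hθ.exists_isParent hE hEout
  have hPX := hθ.parent_eq_of_gap hX hO hE hP hXE ((embraces_iff ⟨q, hqE⟩).2
    ⟨⟨u, hu, fun z hz => (hEin z hz).1.le⟩, ⟨v, hv, fun z hz => (hEin z hz).2.le⟩⟩)
    hu haO ha hpO (fun z hz => O.le_max' z hz) hqE rfl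
  have := (hpar E hE hEout P hP).mod_two_ne hqE (hPX ▸ hu)
  have := hpp.mod_two_eq hO haO hpO
  simp only [q] at *
  omega

end Parity

section CyclicSucc

variable {m : ℕ}

def IsCyclicSucc (B : Finset (Fin m)) (b c : Fin m) : Prop :=
  c ∈ B ∧ ((b < c ∧ ∀ x ∈ B, b < x → c ≤ x) ∨ (IsMaxOf b B ∧ IsMinOf c B))

lemma IsCyclicSucc.unique {B : Finset (Fin m)} {b c c' : Fin m} (h : IsCyclicSucc B b c)
    (h' : IsCyclicSucc B b c') : c = c' := by
  obtain ⟨hc, ⟨hbc, hcmin⟩ | ⟨hbmax, hcmin⟩⟩ := h <;>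
    obtain ⟨hc', ⟨hbc', hc'min⟩ | ⟨hbmax', hc'min⟩⟩ := h'
  · exact le_antisymm (hcmin c' hc' hbc') (hc'min c hc hbc)
  · exact absurd (hbmax'.2 c hc) (not_le.2 hbc)
  · exact absurd (hbmax.2 c' hc') (not_le.2 hbc')
  · exact le_antisymm (hcmin.2 c' hc') (hc'min.2 c hc)

lemma IsCyclicSucc.injective {B : Finset (Fin m)} {a b c : Fin m} (ha : IsCyclicSucc B a c)
    (hb : IsCyclicSucc B b c) (haB : a ∈ B) (hbB : b ∈ B) : a = b := by
  obtain ⟨-, ⟨hac, hamin⟩ | ⟨hamax, hcmin⟩⟩ := ha <;>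
    obtain ⟨-, ⟨hbc, hbmin⟩ | ⟨hbmax, hcmin'⟩⟩ := hb
  · rcases lt_trichotomy a b with hab | hab | hab
    · exact absurd (hamin b hbB hab) (not_le.2 hbc)
    · exact hab
    · exact absurd (hbmin a haB hab) (not_le.2 hac)
  · exact absurd (hcmin'.2 a haB) (not_le.2 hac)
  · exact absurd (hcmin.2 b hbB) (not_le.2 hbc)
  · exact le_antisymm (hbmax.2 a haB) (hamax.2 b hbB)

lemma isCyclicSucc_image_iff {n : ℕ} {f : Fin n → Fin m} (hf : StrictMono f)
    {B : Finset (Fin n)} {b c : Fin n} :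
    IsCyclicSucc (B.image f) (f b) (f c) ↔ IsCyclicSucc B b c := by
  simp [IsCyclicSucc, IsMaxOf, IsMinOf, hf.lt_iff_lt, hf.le_iff_le,
    hf.injective.mem_finset_image]

noncomputable def cyclicSucc (P : FP m) (b : Fin m) : Fin m :=
  if h : ((P.part b).filter (b < ·)).Nonempty then ((P.part b).filter (b < ·)).min' h
  else (P.part b).min' ⟨b, P.mem_part (Finset.mem_univ b)⟩

lemma isCyclicSucc_cyclicSucc (P : FP m) (b : Fin m) :
    IsCyclicSucc (P.part b) b (cyclicSucc P b) := by
  have hb := P.mem_part (Finset.mem_univ b)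
  unfold cyclicSucc
  split_ifs with h
  · obtain ⟨hmem, hlt⟩ := Finset.mem_filter.1 (Finset.min'_mem _ h)
    exact ⟨hmem, Or.inl ⟨hlt, fun x hx hbx => Finset.min'_le _ x (Finset.mem_filter.2 ⟨hx, hbx⟩)⟩⟩
  · refine ⟨Finset.min'_mem _ _, Or.inr ⟨⟨hb, fun x hx => ?_⟩, Finset.min'_mem _ _,
      fun x hx => Finset.min'_le _ x hx⟩⟩
    by_contra hbx
    exact h ⟨x, Finset.mem_filter.2 ⟨hx, lt_of_not_ge hbx⟩⟩

lemma cyclicSucc_injective (P : FP m) : Function.Injective (cyclicSucc P) := by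
  intro a b hab
  have ha := isCyclicSucc_cyclicSucc P a
  have hb := isCyclicSucc_cyclicSucc P b
  rw [← hab] at hb
  have hpart : P.part b = P.part a := P.eq_of_mem_parts (P.part_mem.2 (Finset.mem_univ b))
    (P.part_mem.2 (Finset.mem_univ a)) hb.1 ha.1
  rw [hpart] at hb
  exact ha.injective hb (P.mem_part (Finset.mem_univ a)) (hpart ▸ P.mem_part (Finset.mem_univ b))

noncomputable def cyclicSuccPerm (P : FP m) : Equiv.Perm (Fin m) :=
  Equiv.ofBijective _ (Finite.injective_iff_bijective.1 (cyclicSucc_injective P))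

lemma isAssocPerm_cyclicSuccPerm (P : FP m) : IsAssocPerm P (cyclicSuccPerm P) := by
  intro B hB b hb
  rw [← P.part_eq_of_mem hB hb]
  exact isCyclicSucc_cyclicSucc P b

end CyclicSucc

section Kreweras

variable {m : ℕ} {θ : FP m}

theorem IsParent.mem_of_gap (hθ : IsNC θ) (hpp : ParityPreserving θ)
    (hpar : ParentsAlternate θ) {E F : Finset (Fin m)} (hE : E ∈ θ.parts) (hF : IsParent θ E F)
    {f f' : Fin m} (hf : f ∈ F) (hf' : f' ∈ F) (hff' : f < f')
    (hgapF : ∀ z ∈ F, ¬ (f < z ∧ z < f')) (hEin : ∀ z ∈ E, f < z ∧ z < f') {a b : Fin m}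
    (ha : f.val + 1 = a.val) (hb : b.val + 1 = f'.val) : a ∈ E ∧ b ∈ E := by
  obtain ⟨hFθ, -, -, hFinner⟩ := hF
  obtain ⟨hbO, hOin⟩ := part_succ_fills_gap hθ hpp hpar hFθ hf hf' hff' hgapF ha hb
  have haO : a ∈ θ.part a := θ.mem_part (Finset.mem_univ a)
  obtain ⟨e, he⟩ := θ.nonempty_of_mem_parts hE
  suffices hOE : θ.part a = E from ⟨hOE ▸ haO, hOE ▸ hbO⟩
  by_contra hne
  have hOeE : Embraces (θ.part a) E := (embraces_iff ⟨e, he⟩).2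
    ⟨⟨a, haO, fun z hz => Fin.le_def.2 (by have := Fin.lt_def.1 (hEin z hz).1; omega)⟩,
      ⟨b, hbO, fun z hz => Fin.le_def.2 (by have := Fin.lt_def.1 (hEin z hz).2; omega)⟩⟩
  obtain ⟨o, ho, hoF⟩ := (hFinner _ (θ.part_mem.2 (Finset.mem_univ a)) hne hOeE).exists_le
  exact not_le.2 (hOin o ho).1 (hoF f hf)

theorem succ_max_mem_part_pred_min (hθ : IsNC θ) (hpp : ParityPreserving θ)
    (hpar : ParentsAlternate θ) (h2 : ExactlyTwoOuterBlocks θ) {x y u w : Fin m}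
    (hx : ∀ z ∈ θ.part x, z ≤ x) (hy : IsMinOf y (θ.part x)) (hu : u.val + 1 = y.val)
    (hw : x.val + 1 = w.val) : w ∈ θ.part u ∧ ∀ z ∈ θ.part u, ¬ (u < z ∧ z < w) := by
  set E := θ.part x
  have hE : E ∈ θ.parts := θ.part_mem.2 (Finset.mem_univ x)
  have hxE : x ∈ E := θ.mem_part (Finset.mem_univ x)
  have hEout : ¬ IsOuter θ E := h2.not_isOuter (z := ⟨0, by omega⟩) (w := ⟨m - 1, by omega⟩)
    (fun i => Fin.le_def.2 (Nat.zero_le _)) (fun i => Fin.le_def.2 (Nat.le_sub_one_of_lt i.isLt))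
    hE (fun h => by have := Fin.le_def.1 (hy.2 _ h); simp at this; omega)
    (fun h => by have := Fin.le_def.1 (hx _ h); simp at this; omega)
  -- `E` sits in a gap `(f, f')` of its parent `F`, and fills it
  obtain ⟨F, hF⟩ := hθ.exists_isParent hE hEout
  have hyF : y ∉ F := fun h => hF.2.1 (θ.eq_of_mem_parts hF.1 hE h hy.1)
  obtain ⟨f₀, hf₀, hf₀E⟩ := hF.2.2.1.exists_le
  obtain ⟨f₁, hf₁, hf₁E⟩ := hF.2.2.1.exists_ge
  obtain ⟨f, hf, f', hf', hfy, hyf', hgapF⟩ := Finset.exists_consecutive_around hyF hf₀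
    (lt_of_le_of_ne (hf₀E y hy.1) fun h => hyF (h ▸ hf₀)) hf₁
    (lt_of_le_of_ne ((hx y hy.1).trans (hf₁E x hxE)) fun h => hyF (h ▸ hf₁))
  have hEin : ∀ z ∈ E, f < z ∧ z < f' := fun z hz =>
    hθ.mem_Ioo_of_mem_Ioo hF.1 hE hF.2.1 hf hf' hy.1 hfy hyf' hz
  have hff' := Fin.lt_def.1 (hfy.trans hyf')
  obtain ⟨haE, hbE⟩ := hF.mem_of_gap hθ hpp hpar hE hf hf' (hfy.trans hyf') hgapF hEin
    (a := ⟨f.val + 1, by omega⟩) (b := ⟨f'.val - 1, by omega⟩) rfl (by simp; omega)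
  have hya := Fin.le_def.1 (hy.2 _ haE)
  have hxb := Fin.le_def.1 (hx _ hbE)
  have := Fin.lt_def.1 hfy
  have := Fin.lt_def.1 (hEin x hxE).2
  simp only at hya hxb
  obtain rfl : u = f := Fin.ext (by omega)
  obtain rfl : w = f' := Fin.ext (by omega)
  rw [θ.part_eq_of_mem hF.1 hf]
  exact ⟨hf', hgapF⟩

theorem first_mem_part_pred_min (hθ : IsNC θ) (h2 : ExactlyTwoOuterBlocks θ)
    {x y u z₀ : Fin m} (hx : ∀ i, i ≤ x) (hy : IsMinOf y (θ.part x)) (hu : u.val + 1 = y.val)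
    (hz₀ : ∀ i, z₀ ≤ i) : z₀ ∈ θ.part u ∧ ∀ z ∈ θ.part u, z ≤ u := by
  set E := θ.part x
  set O := θ.part u
  have hE : E ∈ θ.parts := θ.part_mem.2 (Finset.mem_univ x)
  have hO : O ∈ θ.parts := θ.part_mem.2 (Finset.mem_univ u)
  have hxE : x ∈ E := θ.mem_part (Finset.mem_univ x)
  have huO : u ∈ O := θ.mem_part (Finset.mem_univ u)
  have hOE : O ≠ E := fun h => by have := Fin.le_def.1 (hy.2 u (h ▸ huO)); omega
  -- a block reaching beyond `u` would have to cross `E = [y, x]`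
  have hcross : ∀ Y ∈ θ.parts, Y ≠ E → ∀ v ∈ Y, v < y → ∀ z ∈ Y, z ≤ u := by
    intro Y hY hYE v hv hvy z hz
    by_contra! huz
    have hyz : y < z := lt_of_le_of_ne (Fin.le_def.2 (by have := Fin.lt_def.1 huz; omega))
      fun h => hYE (θ.eq_of_mem_parts hY hE (h ▸ hz) hy.1)
    have hzx : z < x := lt_of_le_of_ne (hx z) fun h => hYE (θ.eq_of_mem_parts hY hE (h ▸ hz) hxE)
    exact hYE (hθ.eq_of_cross hY hE hv hz hy.1 hxE hvy hyz hzx)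
  have huy : u < y := Fin.lt_def.2 (by omega)
  refine ⟨?_, hcross O hO hOE u huO huy⟩
  by_contra hz₀O
  have hxO : x ∉ O := fun h => hOE (θ.eq_of_mem_parts hO hE h hxE)
  obtain ⟨V, hV, hVO⟩ : ∃ V ∈ θ.parts, StrictlyEmbraces V O := by
    by_contra h
    exact h2.not_isOuter hz₀ hx hO hz₀O hxO ⟨hO, h⟩
  obtain ⟨⟨v, hv, hvO⟩, ⟨v', hv', hv'O⟩⟩ := (strictlyEmbraces_iff ⟨u, huO⟩).1 hVO
  have hVE : V ≠ E := fun h => not_le.2 ((hvO u huO).trans huy) (hy.2 v (h ▸ hv))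
  exact not_le.2 (hv'O u huO) (hcross V hV hVE v hv ((hvO u huO).trans huy) v' hv')

theorem IsCyclicSucc.part_pred (hθ : IsNC θ) (hpp : ParityPreserving θ)
    (hpar : ParentsAlternate θ) (h2 : ExactlyTwoOuterBlocks θ) {x y u : Fin m}
    (hxy : IsCyclicSucc (θ.part x) x y) (hu : u.val + 1 = y.val) :
    IsCyclicSucc (θ.part u) u (finRotate m x) := by
  obtain ⟨hyE, ⟨hxy, hnext⟩ | ⟨hxmax, hymin⟩⟩ := hxy
  · have hx1 : x.val + 1 < m := by have := y.isLt; have := Fin.lt_def.1 hxy; omega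
    have ha : x.val + 1 = (finRotate m x).val := by rw [val_finRotate, Nat.mod_eq_of_lt hx1]
    obtain ⟨huO, hOin⟩ := part_succ_fills_gap hθ hpp hpar (θ.part_mem.2 (Finset.mem_univ x))
      (θ.mem_part (Finset.mem_univ x)) hyE hxy
      (fun z hz ⟨hxz, hzy⟩ => not_le.2 hzy (hnext z hz hxz)) ha hu
    rw [θ.part_eq_of_mem (θ.part_mem.2 (Finset.mem_univ _)) huO]
    refine ⟨θ.mem_part (Finset.mem_univ _), Or.inr ⟨⟨huO, fun z hz => ?_⟩,
      θ.mem_part (Finset.mem_univ _), fun z hz => ?_⟩⟩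
    · exact Fin.le_def.2 (by have := Fin.lt_def.1 (hOin z hz).2; omega)
    · exact Fin.le_def.2 (by have := Fin.lt_def.1 (hOin z hz).1; omega)
  · by_cases hx1 : x.val + 1 < m
    · have hw : (finRotate m x).val = x.val + 1 := by rw [val_finRotate, Nat.mod_eq_of_lt hx1]
      obtain ⟨hwO, hgap⟩ :=
        succ_max_mem_part_pred_min hθ hpp hpar h2 hxmax.2 hymin hu hw.symm
      refine ⟨hwO, Or.inl ⟨Fin.lt_def.2 ?_, fun z hz huz => le_of_not_gt fun hzw =>
        hgap z hz ⟨huz, hzw⟩⟩⟩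
      have := Fin.le_def.1 (hxmax.2 y hyE)
      omega
    · have h0 : (finRotate m x).val = 0 := by
        rw [val_finRotate, show x.val + 1 = m by have := x.isLt; omega, Nat.mod_self]
      obtain ⟨h0u, humax⟩ := first_mem_part_pred_min hθ h2
        (fun i => Fin.le_def.2 (by have := i.isLt; omega)) hymin hu
        (fun i => Fin.le_def.2 (by rw [h0]; exact Nat.zero_le _))
      exact ⟨h0u, Or.inr ⟨⟨θ.mem_part (Finset.mem_univ u), humax⟩, h0u,
        fun i _ => Fin.le_def.2 (by rw [h0]; exact Nat.zero_le _)⟩⟩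

end Kreweras

section OddEvenJoin

variable {n : ℕ}

lemma oddEmb_strictMono : StrictMono (oddEmb (n := n)) := fun a b h => by
  simp only [oddEmb, Fin.mk_lt_mk]
  have := Fin.lt_def.1 h
  omega

lemma evenEmb_strictMono : StrictMono (evenEmb (n := n)) := fun a b h => by
  simp only [evenEmb, Fin.mk_lt_mk]
  have := Fin.lt_def.1 h
  omega

lemma oddEmb_finRotate (b : Fin n) : oddEmb (finRotate n b) = finRotate (2 * n) (evenEmb b) := by
  ext
  simp only [oddEmb, evenEmb, val_finRotate]
  rw [show 2 * b.val + 1 + 1 = 2 * (b.val + 1) by ring, Nat.mul_mod_mul_left]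

variable {π ρ : FP n} {θ : FP (2 * n)}

lemma IsOddEvenJoin.parityPreserving (hθ : IsOddEvenJoin π ρ θ) : ParityPreserving θ := by
  intro B hB
  rw [show θ.parts = _ from hθ, Finset.mem_union] at hB
  rcases hB with hB | hB <;> obtain ⟨A, -, rfl⟩ := Finset.mem_image.1 hB
  · exact Or.inl fun x hx => by obtain ⟨a, -, rfl⟩ := Finset.mem_image.1 hx; simp [oddEmb]
  · exact Or.inr fun x hx => by obtain ⟨a, -, rfl⟩ := Finset.mem_image.1 hx; simp [evenEmb]

lemma IsOddEvenJoin.part_oddEmb (hθ : IsOddEvenJoin π ρ θ) (a : Fin n) :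
    θ.part (oddEmb a) = (π.part a).image oddEmb :=
  θ.part_eq_of_mem (by
      rw [show θ.parts = _ from hθ]
      exact Finset.mem_union_left _ (Finset.mem_image_of_mem _ (π.part_mem.2 (Finset.mem_univ a))))
    (Finset.mem_image_of_mem _ (π.mem_part (Finset.mem_univ a)))

lemma IsOddEvenJoin.part_evenEmb (hθ : IsOddEvenJoin π ρ θ) (b : Fin n) :
    θ.part (evenEmb b) = (ρ.part b).image evenEmb :=
  θ.part_eq_of_mem (by
      rw [show θ.parts = _ from hθ]
      exact Finset.mem_union_right _ (Finset.mem_image_of_mem _ (ρ.part_mem.2 (Finset.mem_univ b))))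
    (Finset.mem_image_of_mem _ (ρ.mem_part (Finset.mem_univ b)))

end OddEvenJoin

theorem statement15_general (n : ℕ) (π ρ : FP n)
    (θ : FP (2*n)) (hθ : IsOddEvenJoin π ρ θ) (hθNC : IsNC θ)
    (h2 : ExactlyTwoOuterBlocks θ)
    (hpar : ∀ A ∈ θ.parts, ¬ IsOuter θ A → ∀ P, IsParent θ A P → OppositeParity A P) :
    IsKrewerasPair π ρ := by
  refine ⟨cyclicSuccPerm π, cyclicSuccPerm ρ, isAssocPerm_cyclicSuccPerm π,
    isAssocPerm_cyclicSuccPerm ρ, Equiv.ext fun b => ?_⟩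
  rw [Equiv.Perm.mul_apply, eq_comm, Equiv.Perm.inv_eq_iff_eq]
  set c := cyclicSuccPerm ρ b
  have hbc : IsCyclicSucc (θ.part (evenEmb b)) (evenEmb b) (evenEmb c) := by
    rw [hθ.part_evenEmb, isCyclicSucc_image_iff evenEmb_strictMono]
    exact isCyclicSucc_cyclicSucc ρ b
  have hc := hbc.part_pred hθNC hθ.parityPreserving hpar h2 (u := oddEmb c) rfl
  rw [hθ.part_oddEmb, ← oddEmb_finRotate, isCyclicSucc_image_iff oddEmb_strictMono] at hc
  exact ((isCyclicSucc_cyclicSucc π c).unique hc).symm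

/-- Lemma 6.8: let `π, ρ ∈ NC(n)` be such that
`θ = π^(odd) ∪ ρ^(even)` is in `NC(2n)`.  If `θ` has exactly two outer blocks and
the parent of every non-outer block of `θ` has parity opposite from the block itself,
then `ρ = K(π)`. -/
theorem statement15 (n : ℕ) (hn : 0 < n) (π ρ : FP n) (hπ : IsNC π) (hρ : IsNC ρ)
    (θ : FP (2*n)) (hθ : IsOddEvenJoin π ρ θ) (hθNC : IsNC θ)
    (h2 : ExactlyTwoOuterBlocks θ)
    (hpar : ∀ A ∈ θ.parts, ¬ IsOuter θ A → ∀ P, IsParent θ A P → OppositeParity A P) :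
    IsKrewerasPair π ρ :=
  statement15_general n π ρ θ hθ hθNC h2 hpar
end BBP
end
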